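/- arXiv:1204.4277 — 2 statements merged into one kernel-verified Lean document; each statement's English description precedes it below -/
import Mathlib

section
/- Let p be a prime and let D be a group generated by elements x, y together with central elements t₁, z₂, z₃ ∈ Z(D) such that: t₁ has order p^{m₁} for some m₁ ≥ 1; [x,y] = t₁^{p^{m₁−1}}; x^p lies in the subgroup generated by t₁ and z₂; and y^p lies in the subgroup generated by t₁, z₂ and z₃. Let A be any finitely generated abelian group and set G = D × A (external direct product). Then G is a finitely generated group and G/Z(G) is isomorphic to C_p × C_p. -/
/-- Let `p` be a prime and `D` a group generated by `x, y` together
with central elements `t₁, z₂, z₃` such that `o(t₁) = p^{m₁}` with `m₁ ≥ 1`,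
`[x,y] = t₁^{p^{m₁-1}}`, `x^p ∈ ⟨t₁⟩⟨z₂⟩` and `y^p ∈ ⟨t₁⟩⟨z₂⟩⟨z₃⟩`.  Let `A` be any
finitely generated abelian group and `G = D × A`.  Then `G` is finitely generated
and `G/Z(G) ≅ C_p × C_p`. -/
theorem statement1 {p : ℕ} (hp : p.Prime)
    {D : Type*} [Group D] {A : Type*} [CommGroup A] (hA : Group.FG A)
    (x y t₁ z₂ z₃ : D)
    (ht₁ : t₁ ∈ Subgroup.center D) (hz₂ : z₂ ∈ Subgroup.center D)
    (hz₃ : z₃ ∈ Subgroup.center D)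
    (hgen : Subgroup.closure ({x, y, t₁, z₂, z₃} : Set D) = ⊤)
    (m₁ : ℕ) (hm₁ : 1 ≤ m₁) (hord : orderOf t₁ = p ^ m₁)
    (hcomm : x⁻¹ * y⁻¹ * x * y = t₁ ^ p ^ (m₁ - 1))
    (hx : x ^ p ∈ Subgroup.zpowers t₁ ⊔ Subgroup.zpowers z₂)
    (hy : y ^ p ∈ Subgroup.zpowers t₁ ⊔ Subgroup.zpowers z₂ ⊔ Subgroup.zpowers z₃) :
    Group.FG (D × A) ∧
    Nonempty (((D × A) ⧸ Subgroup.center (D × A)) ≃*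
      (Multiplicative (ZMod p) × Multiplicative (ZMod p))) := by
  haveI : NeZero p := ⟨hp.ne_zero⟩
  have hSfin : ({x, y, t₁, z₂, z₃} : Set D).Finite :=
    ((((Set.finite_singleton z₃).insert z₂).insert t₁).insert y).insert x
  -- FG part
  have hFG : Group.FG (D × A) := by
    obtain ⟨T, hT, hTfin⟩ := Group.fg_iff.mp hA
    refine Group.fg_iff.mpr ⟨(MonoidHom.inl D A) '' {x, y, t₁, z₂, z₃} ∪
      (MonoidHom.inr D A) '' T, ?_, (hSfin.image _).union (hTfin.image _)⟩
    rw [Subgroup.closure_union, ← MonoidHom.map_closure, ← MonoidHom.map_closure, hgen, hT,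
      eq_top_iff]
    rintro ⟨d, a⟩ -
    have hda : (d, a) = (MonoidHom.inl D A) d * (MonoidHom.inr D A) a := by simp
    rw [hda]
    exact mul_mem (Subgroup.mem_sup_left ⟨d, trivial, rfl⟩)
      (Subgroup.mem_sup_right ⟨a, trivial, rfl⟩)
  refine ⟨hFG, ?_⟩
  -- the commutator c
  set c : D := t₁ ^ p ^ (m₁ - 1) with hcdef
  have hcZ : c ∈ Subgroup.center D := Subgroup.pow_mem _ ht₁ _
  have hcc : ∀ g : D, g * c = c * g := fun g => Subgroup.mem_center_iff.mp hcZ g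
  have hco : ∀ g : D, Commute c g := fun g => (hcc g).symm
  have hcp : c ^ p = 1 := by
    rw [hcdef, ← pow_mul, ← pow_succ, Nat.sub_add_cancel hm₁, ← hord, pow_orderOf_eq_one]
  have hcne : c ≠ 1 := by
    intro h
    have hdvd : orderOf t₁ ∣ p ^ (m₁ - 1) := orderOf_dvd_of_pow_eq_one h
    rw [hord] at hdvd
    have h1 := Nat.le_of_dvd (Nat.pow_pos hp.pos) hdvd
    have h2 : p ^ (m₁ - 1) < p ^ m₁ := Nat.pow_lt_pow_right hp.one_lt (by omega)
    omega
  have hcord : orderOf c = p := by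
    rcases (Nat.Prime.eq_one_or_self_of_dvd hp _ (orderOf_dvd_of_pow_eq_one hcp)) with h | h
    · exact absurd (orderOf_eq_one_iff.mp h) hcne
    · exact h
  have hxy : x * y = y * x * c := by rw [← hcomm]; group
  -- commutation lemmas
  have L2 : ∀ b : ℕ, x * y ^ b = y ^ b * x * c ^ b := by
    intro b
    induction b with
    | zero => simp
    | succ b ih =>
      calc x * y ^ (b+1) = (x * y ^ b) * y := by rw [pow_succ, mul_assoc]
        _ = y ^ b * x * (c ^ b * y) := by rw [ih]; group
        _ = y ^ b * x * (y * c ^ b) := by rw [((hco y).symm.pow_right b).eq]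
        _ = y ^ b * (x * y) * c ^ b := by group
        _ = y ^ b * (y * x * c) * c ^ b := by rw [hxy]
        _ = y ^ (b+1) * x * c ^ (b+1) := by rw [pow_succ, pow_succ]; group
  have L1 : ∀ a : ℕ, x ^ a * y = y * x ^ a * c ^ a := by
    intro a
    induction a with
    | zero => simp
    | succ a ih =>
      calc x ^ (a+1) * y = x * (x ^ a * y) := by rw [pow_succ']; group
        _ = x * (y * x ^ a * c ^ a) := by rw [ih]
        _ = (x * y) * x ^ a * c ^ a := by group
        _ = (y * x * c) * x ^ a * c ^ a := by rw [hxy]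
        _ = y * x * (c * x ^ a) * c ^ a := by group
        _ = y * x * (x ^ a * c) * c ^ a := by rw [(hco (x ^ a)).eq]
        _ = y * x ^ (a+1) * c ^ (a+1) := by rw [pow_succ, pow_succ']; group
  -- centrality test
  have hc_test : ∀ i j : ℕ, x ^ i * y ^ j ∈ Subgroup.center D → c ^ i = 1 ∧ c ^ j = 1 := by
    intro i j hm
    have h := Subgroup.mem_center_iff.mp hm
    constructor
    · -- use g = y
      have e1 : y * x ^ i = x ^ i * y * (c ^ i)⁻¹ := by rw [L1 i]; group
      have key : y * (x ^ i * y ^ j) = (y * (x ^ i * y ^ j)) * (c ^ i)⁻¹ := by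
        calc y * (x ^ i * y ^ j) = (y * x ^ i) * y ^ j := by group
          _ = (x ^ i * y * (c ^ i)⁻¹) * y ^ j := by rw [e1]
          _ = x ^ i * y * ((c ^ i)⁻¹ * y ^ j) := by group
          _ = x ^ i * y * (y ^ j * (c ^ i)⁻¹) := by
              rw [(((hco (y ^ j)).pow_left i).inv_left).eq]
          _ = x ^ i * (y * y ^ j) * (c ^ i)⁻¹ := by group
          _ = x ^ i * (y ^ j * y) * (c ^ i)⁻¹ := by rw [← pow_succ', pow_succ]
          _ = ((x ^ i * y ^ j) * y) * (c ^ i)⁻¹ := by group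
          _ = (y * (x ^ i * y ^ j)) * (c ^ i)⁻¹ := by rw [← h y]
      exact inv_eq_one.mp (left_eq_mul.mp key)
    · -- use g = x
      have e2 : y ^ j * x = x * y ^ j * (c ^ j)⁻¹ := by rw [L2 j]; group
      have key : (x ^ i * y ^ j) * x = ((x ^ i * y ^ j) * x) * (c ^ j)⁻¹ := by
        calc (x ^ i * y ^ j) * x = x ^ i * (y ^ j * x) := by group
          _ = x ^ i * (x * y ^ j * (c ^ j)⁻¹) := by rw [e2]
          _ = (x ^ i * x) * y ^ j * (c ^ j)⁻¹ := by group
          _ = (x * x ^ i) * y ^ j * (c ^ j)⁻¹ := by rw [← pow_succ, pow_succ']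
          _ = (x * (x ^ i * y ^ j)) * (c ^ j)⁻¹ := by group
          _ = ((x ^ i * y ^ j) * x) * (c ^ j)⁻¹ := by rw [h x]
      exact inv_eq_one.mp (left_eq_mul.mp key)
  -- the quotient Q = D / Z(D)
  set mkq : D →* D ⧸ Subgroup.center D := QuotientGroup.mk' (Subgroup.center D) with hmkq
  have hmkZ : ∀ d ∈ Subgroup.center D, mkq d = 1 := fun d hd =>
    (QuotientGroup.eq_one_iff d).mpr hd
  set xq := mkq x with hxqdef
  set yq := mkq y with hyqdef
  have hxpZ : x ^ p ∈ Subgroup.center D :=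
    (sup_le (Subgroup.zpowers_le.mpr ht₁) (Subgroup.zpowers_le.mpr hz₂)) hx
  have hypZ : y ^ p ∈ Subgroup.center D :=
    (sup_le (sup_le (Subgroup.zpowers_le.mpr ht₁) (Subgroup.zpowers_le.mpr hz₂))
      (Subgroup.zpowers_le.mpr hz₃)) hy
  have hxqp : xq ^ p = 1 := by rw [hxqdef, ← map_pow]; exact hmkZ _ hxpZ
  have hyqp : yq ^ p = 1 := by rw [hyqdef, ← map_pow]; exact hmkZ _ hypZ
  have hcq : Commute xq yq := by
    show xq * yq = yq * xq
    rw [hxqdef, hyqdef, ← map_mul, ← map_mul, hxy, map_mul, hmkZ c hcZ, mul_one]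
  have hmerge : ∀ i j k l : ℕ,
      (xq ^ i * yq ^ j) * (xq ^ k * yq ^ l) = xq ^ (i + k) * yq ^ (j + l) := by
    intro i j k l
    have hswap : yq ^ j * xq ^ k = xq ^ k * yq ^ j := (hcq.symm.pow_pow j k).eq
    rw [pow_add, pow_add]
    calc xq ^ i * yq ^ j * (xq ^ k * yq ^ l)
        = xq ^ i * (yq ^ j * xq ^ k) * yq ^ l := by group
      _ = xq ^ i * (xq ^ k * yq ^ j) * yq ^ l := by rw [hswap]
      _ = xq ^ i * xq ^ k * (yq ^ j * yq ^ l) := by group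
  have hpowmod : ∀ g : D ⧸ Subgroup.center D, g ^ p = 1 → ∀ n : ℕ, g ^ (n % p) = g ^ n := by
    intro g hg n
    conv_rhs => rw [← Nat.div_add_mod n p]
    rw [pow_add, pow_mul, hg, one_pow, one_mul]
  have hinvpow : ∀ g : D ⧸ Subgroup.center D, g ^ p = 1 → ∀ i : ℕ,
      (g ^ i)⁻¹ = g ^ ((p - 1) * i) := by
    intro g hg i
    have hpi : (p - 1) * i + i = p * i := by
      conv_rhs => rw [← Nat.sub_add_cancel hp.one_le]
      ring
    have : g ^ ((p - 1) * i) * g ^ i = 1 := by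
      rw [← pow_add, hpi, pow_mul, hg, one_pow]
    exact (eq_inv_of_mul_eq_one_left this).symm
  -- generation of the quotient
  have hgenQ : ∀ d : D, ∃ i j : ℕ, mkq d = xq ^ i * yq ^ j := by
    intro d
    have hd : d ∈ Subgroup.closure ({x, y, t₁, z₂, z₃} : Set D) := hgen ▸ Subgroup.mem_top d
    refine Subgroup.closure_induction ?_ ?_ ?_ ?_ hd
    · intro g hg
      simp only [Set.mem_insert_iff, Set.mem_singleton_iff] at hg
      rcases hg with rfl | rfl | rfl | rfl | rfl
      · exact ⟨1, 0, by simp [hxqdef]⟩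
      · exact ⟨0, 1, by simp [hyqdef]⟩
      · exact ⟨0, 0, by simp [hmkZ _ ht₁]⟩
      · exact ⟨0, 0, by simp [hmkZ _ hz₂]⟩
      · exact ⟨0, 0, by simp [hmkZ _ hz₃]⟩
    · exact ⟨0, 0, by simp⟩
    · rintro a b _ _ ⟨i, j, hij⟩ ⟨k, l, hkl⟩
      exact ⟨i + k, j + l, by rw [map_mul, hij, hkl, hmerge]⟩
    · rintro a _ ⟨i, j, hij⟩
      refine ⟨(p - 1) * i, (p - 1) * j, ?_⟩
      have hswap : yq ^ ((p-1)*j) * xq ^ ((p-1)*i) = xq ^ ((p-1)*i) * yq ^ ((p-1)*j) :=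
        (hcq.symm.pow_pow _ _).eq
      rw [map_inv, hij, mul_inv_rev, hinvpow xq hxqp, hinvpow yq hyqp, hswap]
  -- the homomorphism from C_p × C_p
  have hvalpow : ∀ (a b : ZMod p),
      xq ^ (a + b).val = xq ^ (a.val + b.val) := by
    intro a b
    rw [ZMod.val_add, hpowmod xq hxqp]
  have hvalpow' : ∀ (a b : ZMod p),
      yq ^ (a + b).val = yq ^ (a.val + b.val) := by
    intro a b
    rw [ZMod.val_add, hpowmod yq hyqp]
  set F : Multiplicative (ZMod p) × Multiplicative (ZMod p) →* D ⧸ Subgroup.center D :=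
    MonoidHom.mk' (fun ab => xq ^ (ab.1.toAdd.val) * yq ^ (ab.2.toAdd.val)) (by
      rintro ⟨a, b⟩ ⟨a', b'⟩
      show xq ^ ((a * a').toAdd.val) * yq ^ ((b * b').toAdd.val) =
        (xq ^ (a.toAdd.val) * yq ^ (b.toAdd.val)) *
          (xq ^ (a'.toAdd.val) * yq ^ (b'.toAdd.val))
      have h1 : (a * a').toAdd = a.toAdd + a'.toAdd := rfl
      have h2 : (b * b').toAdd = b.toAdd + b'.toAdd := rfl
      rw [h1, h2, hvalpow, hvalpow', ← hmerge]) with hF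
  have hFinj : Function.Injective F := by
    rw [injective_iff_map_eq_one]
    rintro ⟨a, b⟩ hab
    have h1 : mkq (x ^ a.toAdd.val * y ^ b.toAdd.val) = 1 := by
      rw [map_mul, map_pow, map_pow]
      exact hab
    have h2 : x ^ a.toAdd.val * y ^ b.toAdd.val ∈ Subgroup.center D :=
      (QuotientGroup.eq_one_iff _).mp h1
    obtain ⟨hci, hcj⟩ := hc_test _ _ h2
    have hi : p ∣ a.toAdd.val := by
      have h' := orderOf_dvd_of_pow_eq_one hci
      rwa [hcord] at h'
    have hj : p ∣ b.toAdd.val := by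
      have h' := orderOf_dvd_of_pow_eq_one hcj
      rwa [hcord] at h'
    have hiv : a.toAdd.val = 0 := Nat.eq_zero_of_dvd_of_lt hi (ZMod.val_lt _)
    have hjv : b.toAdd.val = 0 := Nat.eq_zero_of_dvd_of_lt hj (ZMod.val_lt _)
    have ha : a.toAdd = 0 := (ZMod.val_eq_zero _).mp hiv
    have hb : b.toAdd = 0 := (ZMod.val_eq_zero _).mp hjv
    have : a = 1 := by
      have := congrArg Multiplicative.ofAdd ha
      simpa using this
    have hb' : b = 1 := by
      have := congrArg Multiplicative.ofAdd hb
      simpa using this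
    rw [this, hb']
    rfl
  have hFsurj : Function.Surjective F := by
    intro q
    obtain ⟨d, rfl⟩ := QuotientGroup.mk'_surjective (Subgroup.center D) q
    obtain ⟨i, j, hij⟩ := hgenQ d
    refine ⟨(Multiplicative.ofAdd (i : ZMod p), Multiplicative.ofAdd (j : ZMod p)), ?_⟩
    show xq ^ ((i : ZMod p).val) * yq ^ ((j : ZMod p).val) = mkq d
    rw [ZMod.val_natCast, ZMod.val_natCast, hpowmod xq hxqp, hpowmod yq hyqp, hij]
  have e : Multiplicative (ZMod p) × Multiplicative (ZMod p) ≃* D ⧸ Subgroup.center D :=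
    MulEquiv.ofBijective F ⟨hFinj, hFsurj⟩
  -- center of the product
  have hcent_prod : Subgroup.center (D × A) =
      Subgroup.comap (MonoidHom.fst D A) (Subgroup.center D) := by
    ext ⟨d, a⟩
    constructor
    · intro h
      refine Subgroup.mem_comap.mpr (Subgroup.mem_center_iff.mpr fun g => ?_)
      exact congrArg Prod.fst (Subgroup.mem_center_iff.mp h (g, 1))
    · intro h
      refine Subgroup.mem_center_iff.mpr ?_
      rintro ⟨g1, g2⟩
      have h1 : g1 * d = d * g1 := Subgroup.mem_center_iff.mp (Subgroup.mem_comap.mp h) g1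
      exact Prod.ext h1 (mul_comm g2 a)
  set φ : D × A →* D ⧸ Subgroup.center D :=
    (QuotientGroup.mk' (Subgroup.center D)).comp (MonoidHom.fst D A) with hφ
  have hφsurj : Function.Surjective φ :=
    (QuotientGroup.mk'_surjective (Subgroup.center D)).comp (fun d => ⟨(d, 1), rfl⟩)
  have hker : Subgroup.center (D × A) = φ.ker := by
    rw [hφ, ← MonoidHom.comap_ker, QuotientGroup.ker_mk']
    exact hcent_prod
  have e2 : ((D × A) ⧸ Subgroup.center (D × A)) ≃* D ⧸ Subgroup.center D :=
    (QuotientGroup.quotientMulEquivOfEq hker).trans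
      (QuotientGroup.quotientKerEquivOfSurjective φ hφsurj)
  exact ⟨e2.trans e.symm⟩
end

section
/- Let G be a nonabelian group with G/Z(G) isomorphic to C₂ × C₂, and suppose the commutator subgroup of G equals {1, s} for an element s ≠ 1. Define a map * : G → G by g* = g if g ∈ Z(G) and g* = sg if g ∉ Z(G). Then * is an involution of G, that is: (gh)* = h* g* for all g, h ∈ G, and (g*)* = g for all g ∈ G. Moreover g* = g for every g ∈ Z(G), and gg* ∈ Z(G) for every g ∈ G. -/
open scoped commutatorElement

private lemma klein4 : ∀ a b c : Multiplicative (ZMod 2) × Multiplicative (ZMod 2),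
    c = 1 ∨ c = a ∨ c = b ∨ c = a * b ∨ a = b ∨ a = 1 ∨ b = 1 := by
  intro a b c
  fin_cases a <;> fin_cases b <;> fin_cases c <;> decide

private lemma klein_sq : ∀ a : Multiplicative (ZMod 2) × Multiplicative (ZMod 2),
    a * a = 1 := by decide

private lemma form_commute {G : Type*} [Group G] {X Y c₁ c₂ : G}
    (hXY : Commute X Y) (h₁ : ∀ x : G, Commute x c₁) (h₂ : ∀ x : G, Commute x c₂) :
    (X * c₁) * (Y * c₂) = (Y * c₂) * (X * c₁) :=
  (Commute.mul_left (hXY.mul_right (h₂ X)) ((h₁ (Y * c₂)).symm)).eq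

/-- Let `G` be a nonabelian group with `G/Z(G) ≅ C₂ × C₂` whose
commutator subgroup is `{1, s}` with `s ≠ 1`.  The map `g* = g` for `g ∈ Z(G)` and
`g* = sg` for `g ∉ Z(G)` is an involution of `G` fixing the center, and `gg* ∈ Z(G)`
for every `g`. -/
theorem statement5 {G : Type*} [Group G]
    (hna : ∃ a b : G, a * b ≠ b * a)
    (hiso : Nonempty ((G ⧸ Subgroup.center G) ≃*
      (Multiplicative (ZMod 2) × Multiplicative (ZMod 2))))
    {s : G} (hs : s ≠ 1) (hcomm : (commutator G : Set G) = {1, s})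
    (star : G → G)
    (hstar_c : ∀ g ∈ Subgroup.center G, star g = g)
    (hstar_nc : ∀ g ∉ Subgroup.center G, star g = s * g) :
    (∀ g h : G, star (g * h) = star h * star g) ∧
    (∀ g : G, star (star g) = g) ∧
    (∀ g ∈ Subgroup.center G, star g = g) ∧
    (∀ g : G, g * star g ∈ Subgroup.center G) := by
  obtain ⟨e⟩ := hiso
  -- the quotient is abelian
  have hqab : ∀ x y : G ⧸ Subgroup.center G, x * y = y * x := by
    intro x y
    apply e.injective
    rw [map_mul, map_mul, mul_comm]
  -- every square is central
  have hsq : ∀ g : G, g * g ∈ Subgroup.center G := by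
    intro g
    rw [← QuotientGroup.eq_one_iff]
    have h1 : e ((g : G ⧸ Subgroup.center G) * (g : G ⧸ Subgroup.center G)) = 1 := by
      rw [map_mul, klein_sq]
    have := e.injective (h1.trans (map_one e).symm)
    simpa using this
  -- every commutator is central
  have hcomm_central : ∀ g h : G, ⁅g, h⁆ ∈ Subgroup.center G := by
    intro g h
    rw [← QuotientGroup.eq_one_iff]
    have : (QuotientGroup.mk' (Subgroup.center G)) ⁅g, h⁆ =
        ⁅(QuotientGroup.mk' (Subgroup.center G)) g, (QuotientGroup.mk' (Subgroup.center G)) h⁆ :=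
      map_commutatorElement _ g h
    rw [show ((⁅g, h⁆ : G) : G ⧸ Subgroup.center G) = (QuotientGroup.mk' (Subgroup.center G)) ⁅g, h⁆ from rfl, this,
      commutatorElement_eq_one_iff_mul_comm]
    exact hqab _ _
  -- s is central
  have hs_mem : s ∈ commutator G := by
    have : s ∈ (commutator G : Set G) := by rw [hcomm]; right; rfl
    exact this
  have hs_central : s ∈ Subgroup.center G := by
    have hle : commutator G ≤ Subgroup.center G := by
      rw [commutator_def, Subgroup.commutator_le]
      intro g _ h _
      exact hcomm_central g h
    exact hle hs_mem
  have hsc : ∀ x : G, Commute x s := fun x => Subgroup.mem_center_iff.mp hs_central x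
  -- s has order two
  have hss : s * s = 1 := by
    have hinv : s⁻¹ ∈ (commutator G : Set G) := Subgroup.inv_mem _ hs_mem
    rw [hcomm] at hinv
    rcases hinv with h | h
    · exact absurd (inv_eq_one.mp h) hs
    · have h' : s⁻¹ = s := h
      exact mul_eq_one_iff_eq_inv.mpr h'.symm
  -- commutator dichotomy
  have hdi : ∀ g h : G, g * h = h * g ∨ g * h = s * (h * g) := by
    intro g h
    have hmem : ⁅g, h⁆ ∈ (commutator G : Set G) :=
      Subgroup.commutator_mem_commutator (Subgroup.mem_top g) (Subgroup.mem_top h)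
    rw [hcomm] at hmem
    rcases hmem with h1 | h1
    · exact Or.inl (commutatorElement_eq_one_iff_mul_comm.mp h1)
    · right
      have : g * h * g⁻¹ * h⁻¹ = s := h1
      calc g * h = g * h * g⁻¹ * h⁻¹ * (h * g) := by group
      _ = s * (h * g) := by rw [this]
  -- membership in center vs quotient
  have hmemZ : ∀ g : G, g ∈ Subgroup.center G ↔ ((g : G ⧸ Subgroup.center G) = 1) :=
    fun g => (QuotientGroup.eq_one_iff g).symm
  -- noncentral noncommuting elements with distinct images do not commute
  have hnc : ∀ g h : G, g ∉ Subgroup.center G → h ∉ Subgroup.center G →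
      ((g : G ⧸ Subgroup.center G) ≠ (h : G ⧸ Subgroup.center G)) → g * h ≠ h * g := by
    intro g h hg hh hgh hcom
    obtain ⟨a, b, hab⟩ := hna
    apply hab
    -- decompose any element of G
    have decomp : ∀ x : G, ∃ X c : G, c ∈ Subgroup.center G ∧
        (X = 1 ∨ X = g ∨ X = h ∨ X = g * h) ∧ x = X * c := by
      intro x
      have hk := klein4 (e g) (e h) (e x)
      have hg1 : e (g : G ⧸ Subgroup.center G) ≠ 1 := by
        intro h1
        exact hg ((hmemZ g).mpr (e.injective (h1.trans (map_one e).symm)))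
      have hh1 : e (h : G ⧸ Subgroup.center G) ≠ 1 := by
        intro h1
        exact hh ((hmemZ h).mpr (e.injective (h1.trans (map_one e).symm)))
      have hgh1 : e (g : G ⧸ Subgroup.center G) ≠ e (h : G ⧸ Subgroup.center G) :=
        fun h1 => hgh (e.injective h1)
      have key : (x : G ⧸ Subgroup.center G) = 1 ∨ (x : G ⧸ Subgroup.center G) = g ∨
          (x : G ⧸ Subgroup.center G) = h ∨ (x : G ⧸ Subgroup.center G) = ((g * h : G) : G ⧸ Subgroup.center G) := by
        rcases hk with h1 | h1 | h1 | h1 | h1 | h1 | h1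
        · exact Or.inl (e.injective (h1.trans (map_one e).symm))
        · exact Or.inr (Or.inl (e.injective h1))
        · exact Or.inr (Or.inr (Or.inl (e.injective h1)))
        · refine Or.inr (Or.inr (Or.inr (e.injective ?_)))
          rw [h1]; rw [show ((g * h : G) : G ⧸ Subgroup.center G) = (g : G ⧸ Subgroup.center G) * (h : G ⧸ Subgroup.center G) from rfl, map_mul]
        · exact absurd h1 hgh1
        · exact absurd h1 hg1
        · exact absurd h1 hh1
      rcases key with h1 | h1 | h1 | h1
      · exact ⟨1, x, (hmemZ x).mpr h1, Or.inl rfl, (one_mul x).symm⟩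
      · refine ⟨g, g⁻¹ * x, QuotientGroup.eq.mp h1.symm, Or.inr (Or.inl rfl), ?_⟩
        rw [mul_inv_cancel_left]
      · refine ⟨h, h⁻¹ * x, QuotientGroup.eq.mp h1.symm, Or.inr (Or.inr (Or.inl rfl)), ?_⟩
        rw [mul_inv_cancel_left]
      · refine ⟨g * h, (g * h)⁻¹ * x, QuotientGroup.eq.mp h1.symm,
          Or.inr (Or.inr (Or.inr rfl)), ?_⟩
        rw [mul_inv_cancel_left]
    obtain ⟨X, c₁, hc₁, hX, rfl⟩ := decomp a
    obtain ⟨Y, c₂, hc₂, hY, rfl⟩ := decomp b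
    have Hgh : Commute g h := hcom
    have HXY : Commute X Y := by
      rcases hX with rfl | rfl | rfl | rfl <;> rcases hY with rfl | rfl | rfl | rfl <;>
        first
          | exact Commute.one_left _
          | exact Commute.one_right _
          | exact Commute.refl _
          | exact Hgh
          | exact Hgh.symm
          | exact (Commute.refl _).mul_right Hgh
          | exact Hgh.symm.mul_right (Commute.refl _)
          | exact Commute.mul_left (Commute.refl _) Hgh.symm
          | exact Commute.mul_left Hgh (Commute.refl _)
    exact form_commute HXY (fun x => Subgroup.mem_center_iff.mp hc₁ x)
      (fun x => Subgroup.mem_center_iff.mp hc₂ x)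
  -- the key multiplication rule for noncentral elements
  have hkey : ∀ g h : G, g ∉ Subgroup.center G → h ∉ Subgroup.center G →
      g * h ∉ Subgroup.center G → g * h = s * (h * g) := by
    intro g h hg hh hgh
    rcases hdi g h with h1 | h1
    · exfalso
      have hne : (g : G ⧸ Subgroup.center G) ≠ (h : G ⧸ Subgroup.center G) := by
        intro heq
        apply hgh
        rw [hmemZ]
        rw [show ((g * h : G) : G ⧸ Subgroup.center G) = (g : G ⧸ Subgroup.center G) * (h : G ⧸ Subgroup.center G) from rfl, heq]
        apply e.injective
        rw [map_mul, klein_sq, map_one]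
      exact hnc g h hg hh hne h1
    · exact h1
  have hss2 : ∀ x y : G, (s * x) * (s * y) = x * y := by
    intro x y
    calc (s * x) * (s * y) = s * (x * (s * y)) := mul_assoc _ _ _
      _ = s * ((x * s) * y) := by rw [mul_assoc]
      _ = s * ((s * x) * y) := by rw [(hsc x).eq]
      _ = s * (s * (x * y)) := by rw [mul_assoc]
      _ = (s * s) * (x * y) := (mul_assoc s s (x * y)).symm
      _ = x * y := by rw [hss, one_mul]
  refine ⟨?_, ?_, hstar_c, ?_⟩
  · -- multiplicativity
    intro g h
    by_cases hg : g ∈ Subgroup.center G <;> by_cases hh : h ∈ Subgroup.center G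
    · have hgh : g * h ∈ Subgroup.center G := mul_mem hg hh
      rw [hstar_c _ hgh, hstar_c _ hg, hstar_c _ hh]
      exact (Subgroup.mem_center_iff.mp hg h).symm
    · have hgh : g * h ∉ Subgroup.center G := by
        intro hm
        exact hh (by simpa using mul_mem (Subgroup.inv_mem _ hg) hm)
      rw [hstar_nc _ hgh, hstar_nc _ hh, hstar_c _ hg]
      rw [← Subgroup.mem_center_iff.mp hg h, mul_assoc]
    · have hgh : g * h ∉ Subgroup.center G := by
        intro hm
        exact hg (by simpa using mul_mem hm (Subgroup.inv_mem _ hh))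
      rw [hstar_nc _ hgh, hstar_c _ hh, hstar_nc _ hg]
      rw [← Subgroup.mem_center_iff.mp hh (s * g), mul_assoc]
    · by_cases hgh : g * h ∈ Subgroup.center G
      · rw [hstar_c _ hgh, hstar_nc _ hh, hstar_nc _ hg]
        have h2 : g * (g * h) = g * (h * g) := by
          rw [Subgroup.mem_center_iff.mp hgh g, mul_assoc]
        exact (mul_left_cancel h2).trans (hss2 h g).symm
      · rw [hstar_nc _ hgh, hstar_nc _ hh, hstar_nc _ hg]
        rw [hss2 h g, hkey g h hg hh hgh, ← mul_assoc, hss, one_mul]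
  · -- involutivity
    intro g
    by_cases hg : g ∈ Subgroup.center G
    · rw [hstar_c _ hg, hstar_c _ hg]
    · have hsg : s * g ∉ Subgroup.center G := by
        intro hm
        exact hg (by simpa using mul_mem (Subgroup.inv_mem _ hs_central) hm)
      rw [hstar_nc _ hg, hstar_nc _ hsg, ← mul_assoc, hss, one_mul]
  · -- g * g* is central
    intro g
    by_cases hg : g ∈ Subgroup.center G
    · rw [hstar_c _ hg]; exact hsq g
    · rw [hstar_nc _ hg]
      have : g * (s * g) = s * (g * g) := by
        rw [← mul_assoc, (hsc g).eq, mul_assoc]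
      rw [this]
      exact mul_mem hs_central (hsq g)
end
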